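/- Let G be a nontrivial finite group. The graph G_2(G) = Cay(G^2, S) is strongly regular with parameters (|G|^2, 3(|G|−1), |G|, 6): it has |G|^2 vertices, is 3(|G|−1)-regular, adjacent vertices have exactly |G| common neighbours, and distinct non-adjacent vertices have exactly 6 common neighbours. -/

import Mathlib

namespace CayleyStmt8

variable {G : Type*}

def intvl [Group G] (m : ℕ) (x : G) (k l : ℕ) : Fin m → G :=
  fun i => if k ≤ i.1 + 1 ∧ i.1 + 1 < l then x else 1

def cS (G : Type*) [Group G] (m : ℕ) : Set (Fin m → G) :=
  {v | ∃ (x : G) (k l : ℕ), x ≠ 1 ∧ 1 ≤ k ∧ k < l ∧ l ≤ m + 1 ∧ v = intvl m x k l}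

def cAdj [Group G] (m : ℕ) (g h : Fin m → G) : Prop := h * g⁻¹ ∈ cS G m

/-!
The subgroups `G × 1`, `1 × G` and the diagonal of `G²` have order `n = |G|`, are pairwise
complementary, and `S` is their union with the identity removed. For complementary subgroups
`A ≠ B` there is exactly one `s ∈ A` with `s c⁻¹ ∈ B`, so for `c ≠ 1` the number of `s ∈ S` with
`s c⁻¹ ∈ S` is a sum over ordered pairs `(A, B)`: a pair `(A, A)` contributes `n - 2` if `c ∈ A`,
and a pair `A ≠ B` contributes `1` unless `c ∈ A ∪ B`. For `r` such subgroups this gives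
`λ = n - 2 + (r - 1)(r - 2)` and `μ = r (r - 1)`, that is `n` and `6` when `r = 3`.
-/

open Set Function

section RightTranslation

variable {K : Type*} [Group K]

theorem ncard_preimage_mul_right (S : Set K) (g : K) : ((· * g) ⁻¹' S).ncard = S.ncard :=
  ncard_preimage_of_injective_subset_range (mul_left_injective g)
    fun x _ => ⟨x * g⁻¹, by simp⟩

theorem ncard_setOf_mul_inv_mem_and_mul_inv_mem (S : Set K) (g h : K) :
    {v | v * g⁻¹ ∈ S ∧ v * h⁻¹ ∈ S}.ncard = (S ∩ (· * (h * g⁻¹)⁻¹) ⁻¹' S).ncard := by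
  rw [← ncard_preimage_mul_right (S ∩ _) g⁻¹]
  congr 1
  ext v
  simp [mul_assoc]

end RightTranslation

theorem natCard_range_of_injective {M N : Type*} [Group M] [Group N] {f : M →* N}
    (hf : Injective f) : Nat.card f.range = Nat.card M :=
  (Nat.card_congr (MonoidHom.ofInjective hf).toEquiv).symm

theorem ncard_iUnion_eq_sum {α ι : Type*} [Finite α] [Fintype ι] {A : ι → Set α}
    (hA : Pairwise (Disjoint on A)) : (⋃ i, A i).ncard = ∑ i, (A i).ncard := by
  rw [ncard_iUnion_of_finite (fun _ => toFinite _) hA, finsum_eq_sum_of_fintype]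

section Net

variable {K ι : Type*} [Group K]

open scoped Classical

-- For pairwise complementary `H i`, the Cayley graph on this set is the graph of a net.
def connectionSet (H : ι → Subgroup K) : Set K := ⋃ i, (H i : Set K) \ {1}

theorem exists_mem_and_mul_inv_mem_iff_eq_of_isComplement' {A B : Subgroup K}
    (hBA : B.IsComplement' A) (c : K) : ∃ a, ∀ s, s ∈ A ∧ s * c⁻¹ ∈ B ↔ s = a := by
  obtain ⟨⟨a, ha⟩, hca, huniq⟩ := Subgroup.isComplement_iff_existsUnique_mul_inv_mem.mp hBA c
  refine ⟨a, fun s => ⟨fun ⟨hs, hsc⟩ => ?_, ?_⟩⟩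
  · exact congrArg Subtype.val (huniq ⟨s, hs⟩ (by simpa using inv_mem hsc))
  · rintro rfl
    exact ⟨ha, by simpa using inv_mem hca⟩

theorem pairwise_disjoint_diff_one {H : ι → Subgroup K}
    (hH : Pairwise fun i j => Disjoint (H i) (H j)) :
    Pairwise fun i j => Disjoint ((H i : Set K) \ {1}) ((H j : Set K) \ {1}) := by
  intro i j hij
  rw [Set.disjoint_left]
  rintro s ⟨hsi, hs1⟩ ⟨hsj, -⟩
  exact hs1 (Subgroup.disjoint_def.mp (hH hij) hsi hsj)

variable [Finite K]

theorem ncard_diff_one_inter_preimage_of_isComplement' {A B : Subgroup K}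
    (hBA : B.IsComplement' A) (c : K) :
    (((A : Set K) \ {1}) ∩ (· * c⁻¹) ⁻¹' ((B : Set K) \ {1})).ncard =
      if c ∈ A ∨ c ∈ B then 0 else 1 := by
  obtain ⟨a, ha⟩ := exists_mem_and_mul_inv_mem_iff_eq_of_isComplement' hBA c
  have ha_one : a = 1 ↔ c ∈ B := by simpa [eq_comm] using (ha 1).symm
  have ha_c : a = c ↔ c ∈ A := by simpa [eq_comm] using (ha c).symm
  have hset : ((A : Set K) \ {1}) ∩ (· * c⁻¹) ⁻¹' ((B : Set K) \ {1}) = {a} \ {1, c} := by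
    ext s
    simp only [mem_inter_iff, mem_sdiff, SetLike.mem_coe, mem_singleton_iff, mem_preimage,
      mul_inv_eq_one, mem_insert_iff, not_or]
    rw [← ha s]
    tauto
  rw [hset]
  split_ifs with h
  · rw [ncard_eq_zero, sdiff_eq_empty, singleton_subset_iff]
    rcases h with h | h
    · simp [ha_c.mpr h]
    · simp [ha_one.mpr h]
  · rw [sdiff_eq_left.mpr (by simp_all [eq_comm]), ncard_singleton]

theorem ncard_diff_one_inter_preimage_self {A : Subgroup K} {c : K} (hc : c ≠ 1) :
    (((A : Set K) \ {1}) ∩ (· * c⁻¹) ⁻¹' ((A : Set K) \ {1})).ncard =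
      if c ∈ A then Nat.card A - 2 else 0 := by
  split_ifs with hcA
  · have hset :
        ((A : Set K) \ {1}) ∩ (· * c⁻¹) ⁻¹' ((A : Set K) \ {1}) = (A : Set K) \ {1, c} := by
      ext s
      simp only [mem_inter_iff, mem_sdiff, SetLike.mem_coe, mem_singleton_iff, mem_preimage,
        mul_inv_eq_one, mem_insert_iff, not_or, mul_mem_cancel_right (inv_mem hcA)]
      tauto
    rw [hset, ncard_sdiff (by simp [insert_subset_iff, hcA]), ncard_pair hc.symm,
      ← Nat.card_coe_set_eq]
    rfl
  · rw [ncard_eq_zero]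
    ext s
    simp only [mem_inter_iff, mem_sdiff, SetLike.mem_coe, mem_preimage, mem_empty_iff_false,
      iff_false, not_and]
    intro hs hsc _
    exact hcA (by simpa using A.mul_mem (A.inv_mem hsc) hs.1)

variable {H : ι → Subgroup K} [Fintype ι]

theorem ncard_connectionSet (hH : Pairwise fun i j => Disjoint (H i) (H j)) :
    (connectionSet H).ncard = ∑ i, (Nat.card (H i) - 1) := by
  rw [connectionSet, ncard_iUnion_eq_sum (pairwise_disjoint_diff_one hH)]
  refine Finset.sum_congr rfl fun i _ => ?_
  rw [ncard_sdiff_singleton_of_mem (H i).one_mem, ← Nat.card_coe_set_eq]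
  rfl

theorem ncard_connectionSet_inter_preimage (hH : Pairwise fun i j => Disjoint (H i) (H j))
    (c : K) :
    (connectionSet H ∩ (· * c⁻¹) ⁻¹' connectionSet H).ncard =
      ∑ i, ∑ j, (((H i : Set K) \ {1}) ∩ (· * c⁻¹) ⁻¹' ((H j : Set K) \ {1})).ncard := by
  have hdisj := pairwise_disjoint_diff_one hH
  simp only [connectionSet, preimage_iUnion]
  rw [iUnion_inter]
  simp only [inter_iUnion]
  rw [ncard_iUnion_eq_sum fun i j hij => ?_]
  · refine Finset.sum_congr rfl fun i _ => ncard_iUnion_eq_sum fun j j' hjj' => ?_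
    exact ((hdisj hjj').preimage _).mono inter_subset_right inter_subset_right
  · exact disjoint_iUnion_left.mpr fun _ => disjoint_iUnion_right.mpr fun _ =>
      (hdisj hij).mono inter_subset_left inter_subset_left

theorem ncard_connectionSet_inter_preimage_of_mem
    (hH : Pairwise fun i j => (H i).IsComplement' (H j)) {n : ℕ} (hn : ∀ i, Nat.card (H i) = n)
    {c : K} {k : ι} (hck : c ∈ H k) (hc : c ≠ 1) :
    (connectionSet H ∩ (· * c⁻¹) ⁻¹' connectionSet H).ncard =
      n - 2 + (Fintype.card ι - 1) * (Fintype.card ι - 2) := by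
  have hmem : ∀ i, c ∈ H i ↔ i = k := fun i => ⟨fun hci => by_contra fun hik =>
    hc (Subgroup.disjoint_def.mp (hH hik).disjoint hci hck), fun hik => hik ▸ hck⟩
  rw [ncard_connectionSet_inter_preimage fun i j hij => (hH hij).disjoint]
  have hterm : ∀ i j, (((H i : Set K) \ {1}) ∩ (· * c⁻¹) ⁻¹' ((H j : Set K) \ {1})).ncard =
      if i = j then (if i = k then n - 2 else 0) else if i = k ∨ j = k then 0 else 1 := by
    intro i j
    by_cases hij : i = j
    · rw [if_pos hij, ← hij, ncard_diff_one_inter_preimage_self hc, hn]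
      simp only [hmem]
    · rw [if_neg hij, ncard_diff_one_inter_preimage_of_isComplement' (hH (Ne.symm hij)), hmem,
        hmem]
  simp only [hterm]
  rw [← Finset.add_sum_erase _ _ (Finset.mem_univ k)]
  have hrow_k : ∑ j, (if k = j then (if k = k then n - 2 else 0)
      else if k = k ∨ j = k then 0 else 1) = n - 2 := by
    simp
  have hrow : ∀ i ∈ Finset.univ.erase k, ∑ j, (if i = j then (if i = k then n - 2 else 0)
      else if i = k ∨ j = k then 0 else 1) = Fintype.card ι - 2 := by
    intro i hi
    have hik := Finset.ne_of_mem_erase hi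
    have hcount : ∀ j, (if i = j then (if i = k then n - 2 else 0)
        else if i = k ∨ j = k then 0 else 1) = if j ∈ ({i, k} : Finset ι)ᶜ then 1 else 0 := by
      intro j
      by_cases hij : i = j <;> by_cases hjk : j = k <;> simp_all [eq_comm]
    simp only [hcount, Finset.sum_boole, Finset.filter_mem_eq_inter, Finset.univ_inter,
      Finset.card_compl, Finset.card_pair hik, Nat.cast_id]
  rw [hrow_k, Finset.sum_congr rfl hrow]
  simp [Finset.card_erase_of_mem]

theorem ncard_connectionSet_inter_preimage_of_notMem
    (hH : Pairwise fun i j => (H i).IsComplement' (H j)) {c : K} (hcS : c ∉ connectionSet H)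
    (hc : c ≠ 1) :
    (connectionSet H ∩ (· * c⁻¹) ⁻¹' connectionSet H).ncard =
      Fintype.card ι * (Fintype.card ι - 1) := by
  have hmem : ∀ i, c ∉ H i := fun i hci => hcS (mem_iUnion.mpr ⟨i, hci, hc⟩)
  rw [ncard_connectionSet_inter_preimage fun i j hij => (hH hij).disjoint]
  have hterm : ∀ i j, (((H i : Set K) \ {1}) ∩ (· * c⁻¹) ⁻¹' ((H j : Set K) \ {1})).ncard =
      if i = j then 0 else 1 := by
    intro i j
    by_cases hij : i = j
    · rw [if_pos hij, ← hij, ncard_diff_one_inter_preimage_self hc, if_neg (hmem i)]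
    · rw [if_neg hij, ncard_diff_one_inter_preimage_of_isComplement' (hH (Ne.symm hij)),
        if_neg (not_or.mpr ⟨hmem i, hmem j⟩)]
  simp only [hterm, Finset.sum_ite, Finset.sum_const_zero, zero_add, Finset.sum_const,
    smul_eq_mul, mul_one]
  simp [Finset.filter_ne, Finset.card_erase_of_mem]

end Net

section TwoCoordinates

variable [Group G]

def lineSubgroups : Fin 3 → Subgroup (Fin 2 → G) :=
  ![(MonoidHom.mulSingle (fun _ => G) 0).range, (MonoidHom.mulSingle (fun _ => G) 1).range,
    (Pi.constMonoidHom (Fin 2) G).range]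

theorem mem_lineSubgroups_zero {v : Fin 2 → G} : v ∈ lineSubgroups 0 ↔ v 1 = 1 := by
  refine ⟨?_, fun h => ⟨v 0, funext fun i => ?_⟩⟩
  · rintro ⟨x, rfl⟩
    simp
  · fin_cases i <;> simp [h]

theorem mem_lineSubgroups_one {v : Fin 2 → G} : v ∈ lineSubgroups 1 ↔ v 0 = 1 := by
  refine ⟨?_, fun h => ⟨v 1, funext fun i => ?_⟩⟩
  · rintro ⟨x, rfl⟩
    simp
  · fin_cases i <;> simp [h]

theorem mem_lineSubgroups_two {v : Fin 2 → G} : v ∈ lineSubgroups 2 ↔ v 0 = v 1 := by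
  refine ⟨?_, fun h => ⟨v 0, funext fun i => ?_⟩⟩
  · rintro ⟨x, rfl⟩
    rfl
  · fin_cases i <;> simp [h]

theorem natCard_lineSubgroups (i : Fin 3) : Nat.card (lineSubgroups (G := G) i) = Nat.card G := by
  fin_cases i
  · exact natCard_range_of_injective (Pi.mulSingle_injective (M := fun _ => G) 0)
  · exact natCard_range_of_injective (Pi.mulSingle_injective (M := fun _ => G) 1)
  · exact natCard_range_of_injective (f := Pi.constMonoidHom (Fin 2) G) fun x y h => congrFun h 0

theorem pairwise_isComplement'_lineSubgroups [Finite G] :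
    Pairwise fun i j => (lineSubgroups (G := G) i).IsComplement' (lineSubgroups j) := by
  intro i j hij
  refine Subgroup.isComplement'_of_card_mul_and_disjoint ?_ ?_
  · simp [natCard_lineSubgroups, Nat.card_fun, sq]
  · rw [Subgroup.disjoint_def]
    intro v hi hj
    funext x
    fin_cases i <;> fin_cases j <;> fin_cases x <;>
      simp_all [mem_lineSubgroups_zero, mem_lineSubgroups_one, mem_lineSubgroups_two]

theorem mem_cS_two_iff {v : Fin 2 → G} :
    v ∈ cS G 2 ↔ v ≠ 1 ∧ (v 1 = 1 ∨ v 0 = 1 ∨ v 0 = v 1) := by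
  have hv1 : v ≠ 1 ↔ v 0 ≠ 1 ∨ v 1 ≠ 1 := by
    simp only [Ne, funext_iff, Fin.forall_fin_two, Pi.one_apply]
    tauto
  rw [hv1]
  constructor
  · rintro ⟨x, k, l, hx, hk, hkl, hl, rfl⟩
    have hk2 : k ≤ 2 := by omega
    interval_cases k <;> interval_cases l <;> simp [intvl, hx]
  · rintro ⟨hv, h | h | h⟩
    · refine ⟨v 0, 1, 2, by simp_all, le_rfl, one_lt_two, by norm_num, funext fun i => ?_⟩
      fin_cases i <;> simp [intvl, h]
    · refine ⟨v 1, 2, 3, by simp_all, one_le_two, by norm_num, le_rfl, funext fun i => ?_⟩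
      fin_cases i <;> simp [intvl, h]
    · refine ⟨v 0, 1, 3, by simp_all, le_rfl, by norm_num, le_rfl, funext fun i => ?_⟩
      fin_cases i <;> simp [intvl, h]

theorem cS_two_eq_connectionSet : cS G 2 = connectionSet lineSubgroups := by
  ext v
  simp [mem_cS_two_iff, connectionSet, Fin.exists_fin_succ, mem_lineSubgroups_zero,
    mem_lineSubgroups_one, mem_lineSubgroups_two, and_comm]

end TwoCoordinates

theorem strongly_regular_m_two [Group G] [Fintype G] :
    Fintype.card (Fin 2 → G) = Fintype.card G ^ 2 ∧
    (∀ g : Fin 2 → G, {h : Fin 2 → G | cAdj 2 g h}.ncard =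
      3 * (Fintype.card G - 1)) ∧
    (∀ g h : Fin 2 → G, cAdj 2 g h →
      {v : Fin 2 → G | cAdj 2 g v ∧ cAdj 2 h v}.ncard = Fintype.card G) ∧
    (∀ g h : Fin 2 → G, g ≠ h → ¬ cAdj 2 g h →
      {v : Fin 2 → G | cAdj 2 g v ∧ cAdj 2 h v}.ncard = 6) := by
  have hcard (i : Fin 3) : Nat.card (lineSubgroups (G := G) i) = Fintype.card G := by
    rw [natCard_lineSubgroups, Nat.card_eq_fintype_card]
  have hcompl := pairwise_isComplement'_lineSubgroups (G := G)
  have hS := cS_two_eq_connectionSet (G := G)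
  refine ⟨by simp, fun g => ?_, fun g h hgh => ?_, fun g h hne hgh => ?_⟩
  · change ((· * g⁻¹) ⁻¹' cS G 2).ncard = _
    rw [ncard_preimage_mul_right, hS,
      ncard_connectionSet fun i j hij => (hcompl hij).disjoint]
    simp [hcard]
  · rw [cAdj, hS] at hgh
    obtain ⟨k, hk, hc⟩ := mem_iUnion.mp hgh
    have hone_lt : 1 < Fintype.card G := by
      rw [← hcard k]
      exact (Subgroup.one_lt_card_iff_ne_bot (lineSubgroups k)).mpr
        (Subgroup.ne_bot_iff_exists_ne_one.mpr ⟨⟨_, hk⟩, by simpa using hc⟩)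
    change {v | v * g⁻¹ ∈ cS G 2 ∧ v * h⁻¹ ∈ cS G 2}.ncard = _
    rw [ncard_setOf_mul_inv_mem_and_mul_inv_mem, hS,
      ncard_connectionSet_inter_preimage_of_mem hcompl hcard hk hc, Fintype.card_fin]
    omega
  · change {v | v * g⁻¹ ∈ cS G 2 ∧ v * h⁻¹ ∈ cS G 2}.ncard = _
    rw [ncard_setOf_mul_inv_mem_and_mul_inv_mem, hS,
      ncard_connectionSet_inter_preimage_of_notMem hcompl (hS ▸ hgh)
        (mul_inv_eq_one.not.mpr (Ne.symm hne))]
    simp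

end CayleyStmt8
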